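/- Let p > 2 and let A, B ∈ ℂ^{d×d} satisfy Δ_p(A,B) := min{Δ_p(A),Δ_p(B)} > 0. Set κ_p = (p−2)Λ(A,B)/Δ_p(A,B) and S_κ = {(ζ,η) ∈ ℝ²×ℝ² : |ζ| ≤ κ^{-1}|η| or |η| ≤ κ^{-1}|ζ|}. Then for any κ ≥ κ_p, the function F_p(ζ,η) = (|ζ|²+|η|²)^{p/2} satisfies H^{(A,B)}_{F_p}[ω; (X,Y)] ≥ 0 for all ω ∈ S_κ and X, Y ∈ ℝ^{2d}. -/

import Mathlib

open scoped ComplexConjugate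

noncomputable def Ip (p : ℝ) {d : ℕ} (ξ : EuclideanSpace ℂ (Fin d)) : EuclideanSpace ℂ (Fin d) :=
  WithLp.toLp 2 (fun i => ξ i + ((1 - 2 / p : ℝ) : ℂ) * conj (ξ i))

noncomputable def mulVecE {d : ℕ} (A : Matrix (Fin d) (Fin d) ℂ)
    (ξ : EuclideanSpace ℂ (Fin d)) : EuclideanSpace ℂ (Fin d) :=
  WithLp.toLp 2 (fun i => ∑ j, A i j * ξ j)

noncomputable def Delta (p : ℝ) {d : ℕ} (A : Matrix (Fin d) (Fin d) ℂ) : ℝ :=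
  sInf { r : ℝ | ∃ ξ : EuclideanSpace ℂ (Fin d), ‖ξ‖ = 1 ∧
    r = (@inner ℂ _ _ (mulVecE A ξ) (Ip p ξ)).re }

/-- The real form `M(A) = [[Re A, −Im A],[Im A, Re A]]` of a complex matrix, as a function on
`(Fin 2 × Fin d) × (Fin 2 × Fin d)`; the first coordinate `0` indexes the "real" block and `1`
the "imaginary" block. -/
noncomputable def realForm {d : ℕ} (A : Matrix (Fin d) (Fin d) ℂ) :
    (Fin 2 × Fin d) → (Fin 2 × Fin d) → ℝ := fun x y =>
  if x.1 = 0 then (if y.1 = 0 then (A x.2 y.2).re else -((A x.2 y.2).im))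
  else (if y.1 = 0 then (A x.2 y.2).im else (A x.2 y.2).re)

/-- Entries of the Hessian matrix `D²Φ(ω)` of a function on a Euclidean space. -/
noncomputable def hessE {ι : Type*} [Fintype ι] [DecidableEq ι]
    (Φ : EuclideanSpace ℝ ι → ℝ) (ω : EuclideanSpace ℝ ι) (i j : ι) : ℝ :=
  iteratedFDeriv ℝ 2 Φ ω ![EuclideanSpace.single i 1, EuclideanSpace.single j 1]

/-- Generalized Hessian quadratic form
`H^{(A₁,…,A_l)}_Φ[ω;X] = ⟨(M(A₁*)⊕⋯⊕M(A_l*))·((D²Φ)(ω)⊗I_{ℝ^d}) X, X⟩`. -/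
noncomputable def genHess {l d : ℕ} (A : Fin l → Matrix (Fin d) (Fin d) ℂ)
    (Φ : EuclideanSpace ℝ (Fin l × Fin 2) → ℝ) (ω : EuclideanSpace ℝ (Fin l × Fin 2))
    (X : Fin l × Fin 2 × Fin d → ℝ) : ℝ :=
  ∑ j, ∑ a, ∑ m, (∑ b, ∑ n, realForm (A j).conjTranspose (a, m) (b, n) *
      (∑ k, ∑ c, hessE Φ ω (j, b) (k, c) * X (k, c, n))) * X (j, a, m)

/-- Generalized Hessian quadratic form for a single matrix (functions on `ℝ²`):
`H^A_Φ[ζ;X] = ⟨M(A*)·((D²Φ)(ζ)⊗I_{ℝ^d}) X, X⟩`. -/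
noncomputable def genHess1 {d : ℕ} (A : Matrix (Fin d) (Fin d) ℂ)
    (Φ : EuclideanSpace ℝ (Fin 2) → ℝ) (ζ : EuclideanSpace ℝ (Fin 2))
    (X : Fin 2 × Fin d → ℝ) : ℝ :=
  ∑ a, ∑ m, (∑ b, ∑ n, realForm A.conjTranspose (a, m) (b, n) *
      (∑ c, hessE Φ ζ b c * X (c, n))) * X (a, m)

/-- The identification `V_d : ℂ^d → ℝ^{2d}`. -/
noncomputable def Vd {d : ℕ} (ξ : EuclideanSpace ℂ (Fin d)) : Fin 2 × Fin d → ℝ :=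
  fun x => if x.1 = 0 then (ξ x.2).re else (ξ x.2).im


set_option maxHeartbeats 2000000
set_option synthInstance.maxHeartbeats 400000
set_option linter.unusedSectionVars false


section derivs

variable {E : Type*} [NormedAddCommGroup E] [InnerProductSpace ℝ E]

/-- The map `x ↦ ⟪x, ·⟫` as a continuous linear map, over `ℝ`. -/
noncomputable def islm (E : Type*) [NormedAddCommGroup E] [InnerProductSpace ℝ E] :
    E →ₗ[ℝ] (E →L[ℝ] ℝ) where
  toFun := fun x => innerSL ℝ x
  map_add' := fun x y => by ext z; simp [inner_add_left]
  map_smul' := fun c x => by ext z; simp [inner_smul_left]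

noncomputable def isl2 (E : Type*) [NormedAddCommGroup E] [InnerProductSpace ℝ E] :
    E →L[ℝ] (E →L[ℝ] ℝ) :=
  LinearMap.mkContinuous (islm E) 1
    (fun x => by
      rw [one_mul, show islm E x = innerSL ℝ x from rfl, innerSL_apply_norm])

@[simp] lemma isl2_apply (x y : E) : isl2 E x y = inner ℝ x y := rfl

lemma sqnorm_rpow_eq (w : E) (p : ℝ) : ((‖w‖ ^ 2 : ℝ)) ^ (p / 2) = ‖w‖ ^ p := by
  rw [← Real.rpow_natCast ‖w‖ 2, ← Real.rpow_mul (norm_nonneg w)]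
  congr 1
  ring

lemma rpow_split (w : E) {p : ℝ} (hp : p ≠ 0) : ‖w‖ ^ p = ‖w‖ ^ (p - 1) * ‖w‖ := by
  rw [show p = (p - 1) + 1 by ring, Real.rpow_add' (norm_nonneg w) (by simpa using hp)]
  rw [Real.rpow_one]
  norm_num

lemma hasFDerivAt_pp (p : ℝ) (hp : 2 < p) (x : E) :
    HasFDerivAt (fun w : E => (‖w‖ ^ 2 : ℝ) ^ (p / 2))
      ((p * (‖x‖ ^ 2 : ℝ) ^ (p / 2 - 1)) • innerSL ℝ x) x := by
  rcases eq_or_ne x 0 with rfl | hx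
  · have h0 : ((p * (‖(0 : E)‖ ^ 2 : ℝ) ^ (p / 2 - 1)) • innerSL ℝ (0 : E)) = 0 := by simp
    rw [h0, hasFDerivAt_iff_isLittleO_nhds_zero]
    have key : (fun z : E => (‖z‖ ^ 2 : ℝ) ^ (p / 2)) =o[nhds 0] (fun z : E => z) := by
      rw [Asymptotics.isLittleO_iff]
      intro ε hε
      have hcont : Filter.Tendsto (fun w : E => ‖w‖ ^ (p - 1)) (nhds 0) (nhds 0) := by
        have h1 : Filter.Tendsto (fun w : E => ‖w‖) (nhds 0) (nhds 0) := by
          simpa using tendsto_norm_zero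
        have h2 : Filter.Tendsto (fun t : ℝ => t ^ (p - 1)) (nhds 0)
            (nhds ((0 : ℝ) ^ (p - 1))) :=
          (Real.continuousAt_rpow_const 0 (p - 1) (Or.inr (by linarith))).tendsto
        have h3 := h2.comp h1
        simpa [Function.comp_def, Real.zero_rpow (show p - 1 ≠ 0 by linarith)] using h3
      filter_upwards [hcont.eventually_le_const hε] with w hw
      rw [Real.norm_eq_abs, abs_of_nonneg (Real.rpow_nonneg (by positivity) _),
        sqnorm_rpow_eq, rpow_split w (show p ≠ 0 by linarith)]
      exact mul_le_mul_of_nonneg_right hw (norm_nonneg w)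
    have hf0 : ((‖(0 : E)‖ ^ 2 : ℝ)) ^ (p / 2) = 0 := by
      rw [sqnorm_rpow_eq, norm_zero, Real.zero_rpow (by linarith)]
    simpa [Real.zero_rpow (show p / 2 ≠ 0 from ne_of_gt (by linarith))] using key
  · have hN : HasFDerivAt (fun w : E => (‖w‖ ^ 2 : ℝ)) ((2 : ℝ) • innerSL ℝ x) x := by
      have := (hasStrictFDerivAt_norm_sq x).hasFDerivAt
      convert this using 1
      ext y; simp [two_smul]
    have hNx : (‖x‖ ^ 2 : ℝ) ≠ 0 := pow_ne_zero 2 (norm_ne_zero_iff.mpr hx)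
    have hg : HasDerivAt (fun t : ℝ => t ^ (p / 2)) ((p / 2) * (‖x‖ ^ 2 : ℝ) ^ (p / 2 - 1))
        ((‖x‖ ^ 2 : ℝ)) := Real.hasDerivAt_rpow_const (Or.inl hNx)
    have key := hg.comp_hasFDerivAt x hN
    have heq : ((p / 2) * (‖x‖ ^ 2 : ℝ) ^ (p / 2 - 1)) • ((2 : ℝ) • innerSL ℝ x)
        = (p * (‖x‖ ^ 2 : ℝ) ^ (p / 2 - 1)) • innerSL ℝ x := by
      rw [smul_smul]; congr 1; ring
    rw [heq] at key
    exact key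

end derivs

section derivs2

variable {E : Type*} [NormedAddCommGroup E] [InnerProductSpace ℝ E]

lemma sqnorm_rpow_eq' (w : E) (q : ℝ) : ((‖w‖ ^ 2 : ℝ)) ^ (q / 2) = ‖w‖ ^ q := by
  rw [← Real.rpow_natCast ‖w‖ 2, ← Real.rpow_mul (norm_nonneg w)]
  congr 1
  ring

lemma hasFDerivAt_pp2 (p : ℝ) (hp : 2 < p) (x : E) :
    HasFDerivAt (fun w : E => (p * (‖w‖ ^ 2 : ℝ) ^ (p / 2 - 1)) • innerSL ℝ w)
      ((p * (‖x‖ ^ 2 : ℝ) ^ (p / 2 - 1)) • isl2 E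
        + ((p * (p - 2) * (‖x‖ ^ 2 : ℝ) ^ (p / 2 - 2)) • innerSL ℝ x).smulRight
            (innerSL ℝ x)) x := by
  rcases eq_or_ne x 0 with rfl | hx
  · have h0 : ((p * (‖(0 : E)‖ ^ 2 : ℝ) ^ (p / 2 - 1)) • isl2 E
        + ((p * (p - 2) * (‖(0 : E)‖ ^ 2 : ℝ) ^ (p / 2 - 2)) • innerSL ℝ (0 : E)).smulRight
            (innerSL ℝ (0 : E))) = 0 := by
      have : ((‖(0 : E)‖ ^ 2 : ℝ)) ^ (p / 2 - 1) = 0 := by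
        rw [norm_zero]
        rw [show ((0 : ℝ) ^ 2 : ℝ) = 0 by norm_num]
        exact Real.zero_rpow (by intro h; apply absurd h; intro h'; linarith)
      rw [this]
      ext y z
      simp
    rw [h0, hasFDerivAt_iff_isLittleO_nhds_zero]
    have key : (fun z : E => (p * (‖z‖ ^ 2 : ℝ) ^ (p / 2 - 1)) • innerSL ℝ z)
        =o[nhds 0] (fun z : E => z) := by
      rw [Asymptotics.isLittleO_iff]
      intro ε hε
      have hcont : Filter.Tendsto (fun w : E => p * ‖w‖ ^ (p - 2)) (nhds 0) (nhds 0) := by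
        have h1 : Filter.Tendsto (fun w : E => ‖w‖) (nhds 0) (nhds 0) := by
          simpa using tendsto_norm_zero
        have h2 : Filter.Tendsto (fun t : ℝ => t ^ (p - 2)) (nhds 0)
            (nhds ((0 : ℝ) ^ (p - 2))) :=
          (Real.continuousAt_rpow_const 0 (p - 2) (Or.inr (by linarith))).tendsto
        have h3 := (h2.comp h1).const_mul p
        simpa [Real.zero_rpow (show p - 2 ≠ 0 by intro h; linarith)] using h3
      filter_upwards [hcont.eventually_le_const hε] with w hw
      have hnn : (0 : ℝ) ≤ p * ‖w‖ ^ (p - 2) := by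
        have := Real.rpow_nonneg (norm_nonneg w) (p - 2)
        nlinarith
      calc ‖(p * (‖w‖ ^ 2 : ℝ) ^ (p / 2 - 1)) • innerSL ℝ w‖
          = |p * (‖w‖ ^ 2 : ℝ) ^ (p / 2 - 1)| * ‖innerSL ℝ w‖ := by
            rw [show |p * (‖w‖ ^ 2 : ℝ) ^ (p / 2 - 1)|
                = ‖(p * (‖w‖ ^ 2 : ℝ) ^ (p / 2 - 1) : ℝ)‖ from rfl]
            exact norm_smul (β := E →L[ℝ] ℝ) (p * (‖w‖ ^ 2 : ℝ) ^ (p / 2 - 1)) (innerSL ℝ w)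
        _ = (p * ‖w‖ ^ (p - 2)) * ‖w‖ := by
            rw [innerSL_apply_norm]
            congr 1
            rw [show p / 2 - 1 = (p - 2) / 2 by ring, sqnorm_rpow_eq']
            exact abs_of_nonneg hnn
        _ ≤ ε * ‖w‖ := mul_le_mul_of_nonneg_right hw (norm_nonneg w)
    simpa using key
  · have hNx : (‖x‖ ^ 2 : ℝ) ≠ 0 := pow_ne_zero 2 (norm_ne_zero_iff.mpr hx)
    have hN : HasFDerivAt (fun w : E => (‖w‖ ^ 2 : ℝ)) ((2 : ℝ) • innerSL ℝ x) x := by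
      have := (hasStrictFDerivAt_norm_sq x).hasFDerivAt
      convert this using 1
      ext y; simp [two_smul]
    have hg : HasDerivAt (fun t : ℝ => t ^ (p / 2 - 1))
        ((p / 2 - 1) * (‖x‖ ^ 2 : ℝ) ^ (p / 2 - 1 - 1)) ((‖x‖ ^ 2 : ℝ)) :=
      Real.hasDerivAt_rpow_const (Or.inl hNx)
    have hc0 := hg.comp_hasFDerivAt x hN
    have hc := hc0.const_mul p
    have heq : p • (((p / 2 - 1) * (‖x‖ ^ 2 : ℝ) ^ (p / 2 - 1 - 1)) • ((2 : ℝ) • innerSL ℝ x))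
        = (p * (p - 2) * (‖x‖ ^ 2 : ℝ) ^ (p / 2 - 2)) • innerSL ℝ x := by
      rw [smul_smul, smul_smul]
      congr 1
      rw [show p / 2 - 1 - 1 = p / 2 - 2 by ring]
      ring
    rw [heq] at hc
    have hL : HasFDerivAt (fun w : E => innerSL ℝ w) (isl2 E) x := (isl2 E).hasFDerivAt
    exact hc.smul hL

end derivs2

section hess

variable {E : Type*} [NormedAddCommGroup E] [InnerProductSpace ℝ E]

lemma fderiv_Phi (p : ℝ) (hp : 2 < p) :
    fderiv ℝ (fun w : E => ‖w‖ ^ p)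
      = fun w : E => (p * (‖w‖ ^ 2 : ℝ) ^ (p / 2 - 1)) • innerSL ℝ w := by
  have hΦ : (fun w : E => ‖w‖ ^ p) = (fun w : E => ((‖w‖ ^ 2 : ℝ)) ^ (p / 2)) :=
    funext fun w => (sqnorm_rpow_eq' w p).symm
  rw [hΦ]
  funext w
  exact (hasFDerivAt_pp p hp w).fderiv

lemma hess_eval (p : ℝ) (hp : 2 < p) (ω u v : E) :
    fderiv ℝ (fderiv ℝ (fun w : E => ‖w‖ ^ p)) ω u v
      = p * (‖ω‖ ^ 2 : ℝ) ^ (p / 2 - 1) * (inner ℝ u v : ℝ)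
        + p * (p - 2) * (‖ω‖ ^ 2 : ℝ) ^ (p / 2 - 2) * (inner ℝ ω u : ℝ) * (inner ℝ ω v : ℝ) := by
  rw [fderiv_Phi p hp]
  rw [(hasFDerivAt_pp2 p hp ω).fderiv]
  rw [ContinuousLinearMap.add_apply, ContinuousLinearMap.add_apply]
  rw [ContinuousLinearMap.smul_apply, ContinuousLinearMap.smul_apply]
  rw [ContinuousLinearMap.smulRight_apply]
  rw [ContinuousLinearMap.smul_apply, ContinuousLinearMap.smul_apply]
  rw [isl2_apply, innerSL_apply_apply, innerSL_apply_apply]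
  simp only [smul_eq_mul]

end hess

lemma hessE_formula {ι : Type*} [Fintype ι] [DecidableEq ι] (p : ℝ) (hp : 2 < p)
    (ω : EuclideanSpace ℝ ι) (i j : ι) :
    hessE (fun w => ‖w‖ ^ p) ω i j
      = p * (‖ω‖ ^ 2 : ℝ) ^ (p / 2 - 1) * (if i = j then 1 else 0)
        + p * (p - 2) * (‖ω‖ ^ 2 : ℝ) ^ (p / 2 - 2) * ω i * ω j := by
  rw [show hessE (fun w => ‖w‖ ^ p) ω i j = iteratedFDeriv ℝ 2 (fun w => ‖w‖ ^ p) ω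
    ![EuclideanSpace.single i 1, EuclideanSpace.single j 1] from rfl]
  rw [iteratedFDeriv_two_apply]
  rw [show (![EuclideanSpace.single i 1, EuclideanSpace.single j 1] : Fin 2 → EuclideanSpace ℝ ι) 0
    = EuclideanSpace.single i 1 from rfl]
  rw [show (![EuclideanSpace.single i 1, EuclideanSpace.single j 1] : Fin 2 → EuclideanSpace ℝ ι) 1
    = EuclideanSpace.single j 1 from rfl]
  rw [hess_eval p hp]
  have h1 : (inner ℝ (EuclideanSpace.single i (1 : ℝ)) (EuclideanSpace.single j (1 : ℝ)) : ℝ)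
      = (if i = j then 1 else 0) := by
    rw [EuclideanSpace.inner_single_left]
    simp [EuclideanSpace.single_apply]
  have h2 : (inner ℝ ω (EuclideanSpace.single i (1 : ℝ)) : ℝ) = ω i := by
    rw [EuclideanSpace.inner_single_right]
    simp
  have h3 : (inner ℝ ω (EuclideanSpace.single j (1 : ℝ)) : ℝ) = ω j := by
    rw [EuclideanSpace.inner_single_right]
    simp
  rw [h1, h2, h3]

lemma L1 {d : ℕ} (A : Matrix (Fin d) (Fin d) ℂ) (u v : EuclideanSpace ℂ (Fin d)) :
    ∑ a : Fin 2, ∑ m : Fin d, (∑ b : Fin 2, ∑ n : Fin d,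
      realForm A.conjTranspose (a, m) (b, n) * Vd u (b, n)) * Vd v (a, m)
      = (@inner ℂ _ _ (mulVecE A v) u).re := by
  have hR : (@inner ℂ _ _ (mulVecE A v) u).re
      = ∑ m, ∑ n, ((starRingEnd ℂ) (A n m) * (starRingEnd ℂ) (v m) * u n).re := by
    rw [PiLp.inner_apply]
    simp only [RCLike.inner_apply]
    rw [Complex.re_sum]
    simp only [show ∀ n, (u n * (starRingEnd ℂ) (mulVecE A v n)).re
        = ∑ m, ((starRingEnd ℂ) (A n m) * (starRingEnd ℂ) (v m) * u n).re from fun n => by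
      rw [show mulVecE A v n = ∑ m, A n m * v m from rfl]
      rw [map_sum, Finset.mul_sum, Complex.re_sum]
      refine Finset.sum_congr rfl fun m _ => ?_
      rw [map_mul]; congr 1; ring]
    exact Finset.sum_comm
  rw [hR]
  simp only [Fin.sum_univ_two, realForm, Vd, Matrix.conjTranspose_apply]
  simp only [Finset.sum_mul, ← Finset.sum_add_distrib]
  refine Finset.sum_congr rfl fun m _ => ?_
  refine Finset.sum_congr rfl fun n _ => ?_
  simp [Complex.mul_re, Complex.mul_im]
  ring

/-- componentwise conjugation -/
noncomputable def Jc {d : ℕ} (ξ : EuclideanSpace ℂ (Fin d)) : EuclideanSpace ℂ (Fin d) :=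
  WithLp.toLp 2 (fun i => conj (ξ i))

lemma norm_Jc {d : ℕ} (ξ : EuclideanSpace ℂ (Fin d)) : ‖Jc ξ‖ = ‖ξ‖ := by
  rw [EuclideanSpace.norm_eq, EuclideanSpace.norm_eq]
  congr 1
  refine Finset.sum_congr rfl fun i _ => ?_
  rw [show Jc ξ i = conj (ξ i) from rfl, RCLike.norm_conj]

lemma mulVecE_smul {d : ℕ} (A : Matrix (Fin d) (Fin d) ℂ) (c : ℂ)
    (ξ : EuclideanSpace ℂ (Fin d)) : mulVecE A (c • ξ) = c • mulVecE A ξ := by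
  ext i
  rw [show (c • mulVecE A ξ) i = c * mulVecE A ξ i from rfl]
  rw [show mulVecE A (c • ξ) i = ∑ j, A i j * ((c • ξ) j) from rfl]
  rw [show mulVecE A ξ i = ∑ j, A i j * ξ j from rfl, Finset.mul_sum]
  refine Finset.sum_congr rfl fun j _ => ?_
  rw [show (c • ξ) j = c * ξ j from rfl]
  ring

lemma Jc_smul {d : ℕ} (c : ℂ) (ξ : EuclideanSpace ℂ (Fin d)) :
    Jc (c • ξ) = conj c • Jc ξ := by
  ext i
  rw [show Jc (c • ξ) i = conj ((c • ξ) i) from rfl, show (c • ξ) i = c * ξ i from rfl]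
  rw [show (conj c • Jc ξ) i = conj c * conj (ξ i) from rfl, map_mul]

lemma norm_Ip_le {d : ℕ} (p : ℝ) (hp : 2 < p) (ξ : EuclideanSpace ℂ (Fin d)) :
    ‖Ip p ξ‖ ≤ 2 * ‖ξ‖ := by
  have hIp : Ip p ξ = ξ + ((1 - 2 / p : ℝ) : ℂ) • Jc ξ := by
    ext i
    rw [show (ξ + ((1 - 2 / p : ℝ) : ℂ) • Jc ξ) i = ξ i + ((1 - 2 / p : ℝ) : ℂ) * conj (ξ i)
      from rfl]
    rfl
  rw [hIp]
  calc ‖ξ + ((1 - 2 / p : ℝ) : ℂ) • Jc ξ‖ ≤ ‖ξ‖ + ‖((1 - 2 / p : ℝ) : ℂ) • Jc ξ‖ :=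
        norm_add_le _ _
    _ = ‖ξ‖ + |1 - 2 / p| * ‖ξ‖ := by
        rw [norm_smul, norm_Jc, Complex.norm_real, Real.norm_eq_abs]
    _ ≤ ‖ξ‖ + 1 * ‖ξ‖ := by
        have h1 : 0 < 2 / p := by positivity
        have h2 : 2 / p < 1 := by
          rw [div_lt_one (by linarith)]; linarith
        have : |1 - 2 / p| ≤ 1 := by
          rw [abs_of_nonneg (by linarith)]; linarith
        have := mul_le_mul_of_nonneg_right this (norm_nonneg ξ)
        linarith
    _ = 2 * ‖ξ‖ := by ring

lemma delta_le {d : ℕ} (p : ℝ) (hp : 2 < p) (A : Matrix (Fin d) (Fin d) ℂ) (Λ : ℝ)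
    (hΛ0 : 0 ≤ Λ)
    (hΛ : ∀ ξ σ : EuclideanSpace ℂ (Fin d),
      ‖(@inner ℂ _ _ (mulVecE A ξ) σ)‖ ≤ Λ * ‖ξ‖ * ‖σ‖)
    (ξ : EuclideanSpace ℂ (Fin d)) (hξ : ‖ξ‖ = 1) :
    Delta p A ≤ (@inner ℂ _ _ (mulVecE A ξ) (Ip p ξ)).re := by
  apply csInf_le
  · refine ⟨-(2 * Λ), fun r hr => ?_⟩
    obtain ⟨ξ', hξ', rfl⟩ := hr
    have h1 : ‖(@inner ℂ _ _ (mulVecE A ξ') (Ip p ξ'))‖ ≤ 2 * Λ := by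
      calc ‖(@inner ℂ _ _ (mulVecE A ξ') (Ip p ξ'))‖ ≤ Λ * ‖ξ'‖ * ‖Ip p ξ'‖ := hΛ _ _
        _ ≤ Λ * 1 * (2 * 1) := by
            rw [hξ']
            have := norm_Ip_le p hp ξ'
            rw [hξ'] at this
            have hn : 0 ≤ Λ * 1 := by linarith
            exact mul_le_mul_of_nonneg_left this (by linarith)
        _ = 2 * Λ := by ring
    have h2 : |(@inner ℂ _ _ (mulVecE A ξ') (Ip p ξ')).re|
        ≤ ‖(@inner ℂ _ _ (mulVecE A ξ') (Ip p ξ'))‖ :=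
      Complex.abs_re_le_norm _
    have h3 : ‖(@inner ℂ _ _ (mulVecE A ξ') (Ip p ξ'))‖
        = ‖(@inner ℂ _ _ (mulVecE A ξ') (Ip p ξ'))‖ := rfl
    rw [h3] at h2
    have := neg_abs_le ((@inner ℂ _ _ (mulVecE A ξ') (Ip p ξ')).re)
    have habs := abs_nonneg ((@inner ℂ _ _ (mulVecE A ξ') (Ip p ξ')).re)
    linarith
  · exact ⟨ξ, hξ, rfl⟩

lemma exists_unit_sqrt (μ : ℂ) (h : ‖μ‖ = 1) : ∃ l : ℂ, ‖l‖ = 1 ∧ l ^ 2 = μ := by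
  refine ⟨Complex.exp ((μ.arg / 2 : ℝ) * Complex.I), ?_, ?_⟩
  · rw [Complex.norm_exp_ofReal_mul_I]
  · rw [← Complex.exp_nat_mul]
    have : (2 : ℂ) * ((μ.arg / 2 : ℝ) * Complex.I) = (μ.arg : ℝ) * Complex.I := by
      push_cast
      ring
    rw [show ((2 : ℕ) : ℂ) = (2 : ℂ) by norm_num, this]
    have h2 := Complex.norm_mul_exp_arg_mul_I μ
    rw [h] at h2
    simpa using h2

lemma Ip_smul {d : ℕ} (p : ℝ) (l : ℂ) (ξ : EuclideanSpace ℂ (Fin d)) (i : Fin d) :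
    Ip p (l • ξ) i = l * ξ i + ((1 - 2 / p : ℝ) : ℂ) * conj l * conj (ξ i) := by
  rw [show Ip p (l • ξ) i = (l • ξ) i + ((1 - 2 / p : ℝ) : ℂ) * conj ((l • ξ) i) from rfl]
  rw [show (l • ξ) i = l * ξ i from rfl, map_mul]
  ring

/-- Step A: rotated version of the `Delta` lower bound. -/
lemma deltaA {d : ℕ} (p : ℝ) (hp : 2 < p) (A : Matrix (Fin d) (Fin d) ℂ) (Λ : ℝ)
    (hΛ0 : 0 ≤ Λ)
    (hΛ : ∀ ξ σ : EuclideanSpace ℂ (Fin d),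
      ‖(@inner ℂ _ _ (mulVecE A ξ) σ)‖ ≤ Λ * ‖ξ‖ * ‖σ‖)
    (ξ : EuclideanSpace ℂ (Fin d)) (hξ : ‖ξ‖ = 1) (μ : ℂ) (hμ : ‖μ‖ = 1) :
    Delta p A ≤ (@inner ℂ _ _ (mulVecE A ξ) ξ).re
      + (1 - 2 / p) * (μ * (@inner ℂ _ _ (mulVecE A ξ) (Jc ξ))).re := by
  obtain ⟨l, hl, hl2⟩ := exists_unit_sqrt (conj μ) (by rw [RCLike.norm_conj, hμ])
  have hconj : (conj l) ^ 2 = μ := by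
    rw [← map_pow, hl2, Complex.conj_conj]
  have hlξ : ‖l • ξ‖ = 1 := by rw [norm_smul, hl, hξ, one_mul]
  have key := delta_le p hp A Λ hΛ0 hΛ (l • ξ) hlξ
  have hinner : (@inner ℂ _ _ (mulVecE A (l • ξ)) (Ip p (l • ξ)))
      = (@inner ℂ _ _ (mulVecE A ξ) ξ)
        + ((1 - 2 / p : ℝ) : ℂ) * ((conj l) ^ 2 * (@inner ℂ _ _ (mulVecE A ξ) (Jc ξ))) := by
    rw [mulVecE_smul]
    rw [PiLp.inner_apply, PiLp.inner_apply, PiLp.inner_apply]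
    simp only [RCLike.inner_apply]
    rw [Finset.mul_sum, Finset.mul_sum, ← Finset.sum_add_distrib]
    refine Finset.sum_congr rfl fun i _ => ?_
    rw [show (l • mulVecE A ξ) i = l * mulVecE A ξ i from rfl]
    rw [Ip_smul, show Jc ξ i = conj (ξ i) from rfl]
    have hll : conj l * l = 1 := by
      rw [mul_comm, Complex.mul_conj]
      rw [show Complex.normSq l = ‖l‖ ^ 2 from by
        rw [Complex.sq_norm]]
      rw [hl]
      norm_num
    rw [map_mul]
    linear_combination ((starRingEnd ℂ) (mulVecE A ξ i) * ξ i) * hll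
  rw [hinner] at key
  rw [hconj] at key
  have hre : ((@inner ℂ _ _ (mulVecE A ξ) ξ)
      + ((1 - 2 / p : ℝ) : ℂ) * (μ * (@inner ℂ _ _ (mulVecE A ξ) (Jc ξ)))).re
      = (@inner ℂ _ _ (mulVecE A ξ) ξ).re
        + (1 - 2 / p) * (μ * (@inner ℂ _ _ (mulVecE A ξ) (Jc ξ))).re := by
    rw [Complex.add_re]
    congr 1
    rw [Complex.mul_re, Complex.ofReal_re, Complex.ofReal_im]
    ring
  rw [hre] at key
  exact key

/-- Step B: optimized rotation. -/
lemma deltaB {d : ℕ} (p : ℝ) (hp : 2 < p) (A : Matrix (Fin d) (Fin d) ℂ) (Λ : ℝ)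
    (hΛ0 : 0 ≤ Λ)
    (hΛ : ∀ ξ σ : EuclideanSpace ℂ (Fin d),
      ‖(@inner ℂ _ _ (mulVecE A ξ) σ)‖ ≤ Λ * ‖ξ‖ * ‖σ‖)
    (ξ : EuclideanSpace ℂ (Fin d)) (hξ : ‖ξ‖ = 1) :
    Delta p A ≤ (@inner ℂ _ _ (mulVecE A ξ) ξ).re
      - (1 - 2 / p) * ‖(@inner ℂ _ _ (mulVecE A ξ) (Jc ξ))‖ := by
  set G := (@inner ℂ _ _ (mulVecE A ξ) (Jc ξ)) with hG
  by_cases h0 : G = 0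
  · have key := deltaA p hp A Λ hΛ0 hΛ ξ hξ 1 (by norm_num)
    rw [← hG] at key
    rw [h0] at key ⊢
    simp only [mul_zero, one_mul, Complex.zero_re, norm_zero] at key ⊢
    linarith
  · have hGn : (0 : ℝ) < ‖G‖ := norm_pos_iff.mpr h0
    set μ : ℂ := -(conj G) / ((‖G‖ : ℝ) : ℂ) with hμdef
    have hμ : ‖μ‖ = 1 := by
      rw [hμdef, norm_div, norm_neg, RCLike.norm_conj, Complex.norm_real,
        Real.norm_eq_abs, abs_of_nonneg hGn.le, div_self hGn.ne']
    have hμG : μ * G = -((‖G‖ : ℝ) : ℂ) := by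
      rw [hμdef]
      rw [div_mul_eq_mul_div, neg_mul]
      rw [show conj G * G = ((‖G‖ ^ 2 : ℝ) : ℂ) from by
        rw [mul_comm, Complex.mul_conj, Complex.normSq_eq_norm_sq]]
      rw [neg_div]
      congr 1
      rw [show ((‖G‖ ^ 2 : ℝ) : ℂ) = ((‖G‖ : ℝ) : ℂ) * ((‖G‖ : ℝ) : ℂ) from by
        push_cast; ring]
      rw [mul_div_assoc, div_self (by
        simpa [Complex.ofReal_eq_zero] using hGn.ne'), mul_one]
    have key := deltaA p hp A Λ hΛ0 hΛ ξ hξ μ hμ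
    rw [← hG, hμG] at key
    have hre : ((-((‖G‖ : ℝ) : ℂ))).re = -‖G‖ := by simp
    rw [hre] at key
    linarith

lemma Jc_zero {d : ℕ} : Jc (0 : EuclideanSpace ℂ (Fin d)) = 0 := by
  ext i
  rw [show Jc (0 : EuclideanSpace ℂ (Fin d)) i = conj ((0 : EuclideanSpace ℂ (Fin d)) i)
    from rfl]
  simp

/-- Step C: homogeneous version. -/
lemma deltaC {d : ℕ} (p : ℝ) (hp : 2 < p) (A : Matrix (Fin d) (Fin d) ℂ) (Λ : ℝ)
    (hΛ0 : 0 ≤ Λ)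
    (hΛ : ∀ ξ σ : EuclideanSpace ℂ (Fin d),
      ‖(@inner ℂ _ _ (mulVecE A ξ) σ)‖ ≤ Λ * ‖ξ‖ * ‖σ‖)
    (z : EuclideanSpace ℂ (Fin d)) :
    Delta p A * ‖z‖ ^ 2 ≤ (@inner ℂ _ _ (mulVecE A z) z).re
      - (1 - 2 / p) * ‖(@inner ℂ _ _ (mulVecE A z) (Jc z))‖ := by
  by_cases hz : z = 0
  · rw [hz, Jc_zero]
    simp
  · have hzn : (0 : ℝ) < ‖z‖ := norm_pos_iff.mpr hz
    set c : ℂ := ((‖z‖⁻¹ : ℝ) : ℂ) with hc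
    have hcc : conj c = c := by rw [hc, Complex.conj_ofReal]
    set ξ : EuclideanSpace ℂ (Fin d) := c • z with hξdef
    have hξ : ‖ξ‖ = 1 := by
      rw [hξdef, norm_smul, hc, Complex.norm_real, Real.norm_eq_abs,
        abs_of_nonneg (by positivity), inv_mul_cancel₀ hzn.ne']
    have h1 : (@inner ℂ _ _ (mulVecE A ξ) ξ)
        = (((‖z‖ ^ 2)⁻¹ : ℝ) : ℂ) * (@inner ℂ _ _ (mulVecE A z) z) := by
      rw [hξdef, mulVecE_smul, inner_smul_left, inner_smul_right, hcc, hc]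
      push_cast
      ring
    have h2 : (@inner ℂ _ _ (mulVecE A ξ) (Jc ξ))
        = (((‖z‖ ^ 2)⁻¹ : ℝ) : ℂ) * (@inner ℂ _ _ (mulVecE A z) (Jc z)) := by
      rw [hξdef, mulVecE_smul, Jc_smul, hcc, inner_smul_left, inner_smul_right, hcc, hc]
      push_cast
      ring
    have key := deltaB p hp A Λ hΛ0 hΛ ξ hξ
    rw [h1, h2] at key
    have hre : ((((‖z‖ ^ 2)⁻¹ : ℝ) : ℂ) * (@inner ℂ _ _ (mulVecE A z) z)).re
        = (‖z‖ ^ 2)⁻¹ * (@inner ℂ _ _ (mulVecE A z) z).re := by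
      rw [Complex.mul_re, Complex.ofReal_re, Complex.ofReal_im]
      ring
    have hnrm : ‖(((‖z‖ ^ 2)⁻¹ : ℝ) : ℂ) * (@inner ℂ _ _ (mulVecE A z) (Jc z))‖
        = (‖z‖ ^ 2)⁻¹ * ‖(@inner ℂ _ _ (mulVecE A z) (Jc z))‖ := by
      rw [norm_mul, Complex.norm_real, Real.norm_eq_abs, abs_of_nonneg (by positivity)]
    rw [hre, hnrm] at key
    have hz2 : (0 : ℝ) < ‖z‖ ^ 2 := by positivity
    have := mul_le_mul_of_nonneg_right key hz2.le
    calc Delta p A * ‖z‖ ^ 2 ≤ ((‖z‖ ^ 2)⁻¹ * (@inner ℂ _ _ (mulVecE A z) z).re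
          - 1 * ((1 - 2 / p) * ((‖z‖ ^ 2)⁻¹ * ‖(@inner ℂ _ _ (mulVecE A z) (Jc z))‖)))
            * ‖z‖ ^ 2 := by
          rw [one_mul]; exact this
      _ = (@inner ℂ _ _ (mulVecE A z) z).re
          - (1 - 2 / p) * ‖(@inner ℂ _ _ (mulVecE A z) (Jc z))‖ := by
          field_simp


noncomputable def zvec {d : ℕ} (X : Fin 2 × Fin 2 × Fin d → ℝ) (j : Fin 2) :
    EuclideanSpace ℂ (Fin d) :=
  WithLp.toLp 2 (fun n => (X (j, 0, n) : ℂ) + (X (j, 1, n) : ℂ) * Complex.I)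

noncomputable def cw (ω : EuclideanSpace ℝ (Fin 2 × Fin 2)) (j : Fin 2) : ℂ :=
  (ω (j, 0) : ℂ) + (ω (j, 1) : ℂ) * Complex.I

noncomputable def Tv {d : ℕ} (ω : EuclideanSpace ℝ (Fin 2 × Fin 2))
    (X : Fin 2 × Fin 2 × Fin d → ℝ) : EuclideanSpace ℂ (Fin d) :=
  WithLp.toLp 2 (fun n => ((∑ k : Fin 2, ∑ c : Fin 2, ω (k, c) * X (k, c, n) : ℝ) : ℂ))

lemma hVd_z {d : ℕ} (X : Fin 2 × Fin 2 × Fin d → ℝ) (j b : Fin 2) (n : Fin d) :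
    X (j, b, n) = Vd (zvec X j) (b, n) := by
  fin_cases b <;> simp [Vd, zvec]

lemma step1 {d : ℕ} (p : ℝ) (hp : 2 < p) (ω : EuclideanSpace ℝ (Fin 2 × Fin 2))
    (X : Fin 2 × Fin 2 × Fin d → ℝ) (j b : Fin 2) (n : Fin d) :
    (∑ k : Fin 2, ∑ c : Fin 2, hessE (fun w => ‖w‖ ^ p) ω (j, b) (k, c) * X (k, c, n))
      = p * (‖ω‖ ^ 2 : ℝ) ^ (p / 2 - 1) * Vd (zvec X j) (b, n)
        + p * (p - 2) * (‖ω‖ ^ 2 : ℝ) ^ (p / 2 - 2) * Vd (cw ω j • Tv ω X) (b, n) := by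
  simp only [hessE_formula p hp, Fin.sum_univ_two]
  fin_cases j <;> fin_cases b <;>
    · simp [Vd, cw, Tv, zvec, Fin.sum_univ_two, PiLp.smul_apply, Prod.ext_iff]
      ring

lemma sumsplit {d : ℕ} (M : (Fin 2 × Fin d) → (Fin 2 × Fin d) → ℝ)
    (u1 u2 v : Fin 2 × Fin d → ℝ) (c1 c2 : ℝ) :
    ∑ a : Fin 2, ∑ m : Fin d, (∑ b : Fin 2, ∑ n : Fin d,
        M (a, m) (b, n) * (c1 * u1 (b, n) + c2 * u2 (b, n))) * v (a, m)
      = c1 * ∑ a : Fin 2, ∑ m : Fin d, (∑ b : Fin 2, ∑ n : Fin d,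
          M (a, m) (b, n) * u1 (b, n)) * v (a, m)
        + c2 * ∑ a : Fin 2, ∑ m : Fin d, (∑ b : Fin 2, ∑ n : Fin d,
          M (a, m) (b, n) * u2 (b, n)) * v (a, m) := by
  simp only [Finset.mul_sum, ← Finset.sum_add_distrib]
  refine Finset.sum_congr rfl fun a _ => ?_
  refine Finset.sum_congr rfl fun m _ => ?_
  rw [show (∑ b : Fin 2, ∑ n : Fin d, M (a, m) (b, n) * (c1 * u1 (b, n) + c2 * u2 (b, n)))
      = c1 * (∑ b : Fin 2, ∑ n : Fin d, M (a, m) (b, n) * u1 (b, n))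
        + c2 * (∑ b : Fin 2, ∑ n : Fin d, M (a, m) (b, n) * u2 (b, n)) from by
    simp only [Finset.mul_sum, ← Finset.sum_add_distrib]
    refine Finset.sum_congr rfl fun b _ => ?_
    refine Finset.sum_congr rfl fun n _ => ?_
    ring]
  ring

lemma genHess_eq {d : ℕ} (C : Fin 2 → Matrix (Fin d) (Fin d) ℂ) (p : ℝ) (hp : 2 < p)
    (ω : EuclideanSpace ℝ (Fin 2 × Fin 2)) (X : Fin 2 × Fin 2 × Fin d → ℝ) :
    genHess C (fun w => ‖w‖ ^ p) ω X
      = ∑ j : Fin 2,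
          (p * (‖ω‖ ^ 2 : ℝ) ^ (p / 2 - 1)
              * (@inner ℂ _ _ (mulVecE (C j) (zvec X j)) (zvec X j)).re
            + p * (p - 2) * (‖ω‖ ^ 2 : ℝ) ^ (p / 2 - 2)
              * (@inner ℂ _ _ (mulVecE (C j) (zvec X j)) (cw ω j • Tv ω X)).re) := by
  rw [show genHess C (fun w => ‖w‖ ^ p) ω X = ∑ j : Fin 2, ∑ a : Fin 2, ∑ m : Fin d,
      (∑ b : Fin 2, ∑ n : Fin d, realForm (C j).conjTranspose (a, m) (b, n) *
        (∑ k : Fin 2, ∑ c : Fin 2, hessE (fun w => ‖w‖ ^ p) ω (j, b) (k, c) * X (k, c, n)))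
        * X (j, a, m) from rfl]
  refine Finset.sum_congr rfl fun j _ => ?_
  simp only [step1 p hp ω X j]
  simp only [show ∀ (a : Fin 2) (m : Fin d), X (j, a, m) = Vd (zvec X j) (a, m) from
    fun a m => hVd_z X j a m]
  rw [sumsplit (realForm (C j).conjTranspose) (Vd (zvec X j)) (Vd (cw ω j • Tv ω X))
    (Vd (zvec X j)) _ _]
  rw [L1, L1]


lemma re_ge_neg_norm (w : ℂ) : -‖w‖ ≤ w.re := by
  have h1 := Complex.abs_re_le_norm w
  have h2 := neg_abs_le w.re
  linarith

lemma half_re (w : ℂ) : ((2⁻¹ : ℂ) * w).re = 2⁻¹ * w.re := by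
  simp [Complex.mul_re]

lemma cw_norm_sq (ω : EuclideanSpace ℝ (Fin 2 × Fin 2)) (j : Fin 2) :
    ‖cw ω j‖ ^ 2 = ω (j, 0) ^ 2 + ω (j, 1) ^ 2 := by
  rw [Complex.sq_norm, Complex.normSq_apply]
  simp [cw]
  ring

lemma omega_norm_sq (ω : EuclideanSpace ℝ (Fin 2 × Fin 2)) :
    ‖ω‖ ^ 2 = ‖cw ω 0‖ ^ 2 + ‖cw ω 1‖ ^ 2 := by
  rw [cw_norm_sq, cw_norm_sq, EuclideanSpace.norm_eq, Real.sq_sqrt (by positivity)]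
  rw [Fintype.sum_prod_type]
  simp [Fin.sum_univ_two, Real.norm_eq_abs, sq_abs]

lemma Tv_decomp {d : ℕ} (ω : EuclideanSpace ℝ (Fin 2 × Fin 2))
    (X : Fin 2 × Fin 2 × Fin d → ℝ) :
    Tv ω X = (2⁻¹ : ℂ) • ((conj (cw ω 0)) • zvec X 0 + (cw ω 0) • Jc (zvec X 0)
      + (conj (cw ω 1)) • zvec X 1 + (cw ω 1) • Jc (zvec X 1)) := by
  ext n
  rw [show Tv ω X n = ((∑ k : Fin 2, ∑ c : Fin 2, ω (k, c) * X (k, c, n) : ℝ) : ℂ) from rfl]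
  rw [show ((2⁻¹ : ℂ) • ((conj (cw ω 0)) • zvec X 0 + (cw ω 0) • Jc (zvec X 0)
      + (conj (cw ω 1)) • zvec X 1 + (cw ω 1) • Jc (zvec X 1))) n
    = (2⁻¹ : ℂ) * ((conj (cw ω 0)) * zvec X 0 n + (cw ω 0) * conj (zvec X 0 n)
      + (conj (cw ω 1)) * zvec X 1 n + (cw ω 1) * conj (zvec X 1 n)) from rfl]
  simp only [Fin.sum_univ_two, zvec, cw]
  apply Complex.ext <;> simp <;> ring

lemma term_bound (c1 c2 w : ℂ) (K : ℝ) (hw : ‖w‖ ≤ K) :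
    -(‖c1‖ * ‖c2‖ * K) ≤ (c1 * c2 * w).re := by
  have h := re_ge_neg_norm (c1 * c2 * w)
  rw [norm_mul, norm_mul] at h
  have h2 : ‖c1‖ * ‖c2‖ * ‖w‖ ≤ ‖c1‖ * ‖c2‖ * K :=
    mul_le_mul_of_nonneg_left hw (by positivity)
  linarith

lemma term_eq (c w : ℂ) : (c * conj c * w).re = ‖c‖ ^ 2 * w.re := by
  rw [Complex.mul_conj]
  rw [show ‖c‖ ^ 2 = Complex.normSq c from by
    rw [Complex.sq_norm]]
  exact Complex.re_ofReal_mul _ _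

/-- Lower bound for the second-order term, `j = 0`. -/
lemma RboundA {d : ℕ} (ω : EuclideanSpace ℝ (Fin 2 × Fin 2)) (X : Fin 2 × Fin 2 × Fin d → ℝ)
    (M : Matrix (Fin d) (Fin d) ℂ) (Λ : ℝ)
    (hΛ : ∀ ξ σ : EuclideanSpace ℂ (Fin d),
      ‖(@inner ℂ _ _ (mulVecE M ξ) σ)‖ ≤ Λ * ‖ξ‖ * ‖σ‖) :
    2⁻¹ * (‖cw ω 0‖ ^ 2 * (@inner ℂ _ _ (mulVecE M (zvec X 0)) (zvec X 0)).re
        - ‖cw ω 0‖ ^ 2 * ‖(@inner ℂ _ _ (mulVecE M (zvec X 0)) (Jc (zvec X 0)))‖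
        - 2 * (‖cw ω 0‖ * ‖cw ω 1‖) * (Λ * ‖zvec X 0‖ * ‖zvec X 1‖))
      ≤ (@inner ℂ _ _ (mulVecE M (zvec X 0)) (cw ω 0 • Tv ω X)).re := by
  set x := mulVecE M (zvec X 0) with hx
  set ζ := cw ω 0 with hζ
  set η := cw ω 1 with hη
  have hTin : (@inner ℂ _ _ x (ζ • Tv ω X))
      = (2⁻¹ : ℂ) * ((ζ * conj ζ) * (@inner ℂ _ _ x (zvec X 0))
        + (ζ * ζ) * (@inner ℂ _ _ x (Jc (zvec X 0)))
        + (ζ * conj η) * (@inner ℂ _ _ x (zvec X 1))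
        + (ζ * η) * (@inner ℂ _ _ x (Jc (zvec X 1)))) := by
    rw [inner_smul_right, Tv_decomp]
    simp only [inner_smul_right, inner_add_right, ← hζ, ← hη]
    ring
  rw [hTin, half_re]
  have hsplit : ((ζ * conj ζ) * (@inner ℂ _ _ x (zvec X 0))
        + (ζ * ζ) * (@inner ℂ _ _ x (Jc (zvec X 0)))
        + (ζ * conj η) * (@inner ℂ _ _ x (zvec X 1))
        + (ζ * η) * (@inner ℂ _ _ x (Jc (zvec X 1)))).re
      = ((ζ * conj ζ) * (@inner ℂ _ _ x (zvec X 0))).re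
        + ((ζ * ζ) * (@inner ℂ _ _ x (Jc (zvec X 0)))).re
        + ((ζ * conj η) * (@inner ℂ _ _ x (zvec X 1))).re
        + ((ζ * η) * (@inner ℂ _ _ x (Jc (zvec X 1)))).re := by
    simp [Complex.add_re]
  rw [hsplit]
  have hcrossK : ‖(@inner ℂ _ _ x (zvec X 1))‖ ≤ Λ * ‖zvec X 0‖ * ‖zvec X 1‖ := hΛ _ _
  have hcrossKJ : ‖(@inner ℂ _ _ x (Jc (zvec X 1)))‖ ≤ Λ * ‖zvec X 0‖ * ‖zvec X 1‖ := by
    have := hΛ (zvec X 0) (Jc (zvec X 1))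
    rw [norm_Jc] at this
    exact this
  have t1 : ((ζ * conj ζ) * (@inner ℂ _ _ x (zvec X 0))).re
      = ‖ζ‖ ^ 2 * (@inner ℂ _ _ x (zvec X 0)).re := term_eq _ _
  have t2 : -(‖ζ‖ * ‖ζ‖ * ‖(@inner ℂ _ _ x (Jc (zvec X 0)))‖)
      ≤ ((ζ * ζ) * (@inner ℂ _ _ x (Jc (zvec X 0)))).re := term_bound _ _ _ _ (le_refl _)
  have t3 : -(‖ζ‖ * ‖η‖ * (Λ * ‖zvec X 0‖ * ‖zvec X 1‖))
      ≤ ((ζ * conj η) * (@inner ℂ _ _ x (zvec X 1))).re := by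
    have := term_bound ζ (conj η) _ _ hcrossK
    rw [RCLike.norm_conj] at this
    exact this
  have t4 : -(‖ζ‖ * ‖η‖ * (Λ * ‖zvec X 0‖ * ‖zvec X 1‖))
      ≤ ((ζ * η) * (@inner ℂ _ _ x (Jc (zvec X 1)))).re := term_bound _ _ _ _ hcrossKJ
  have hsq : ‖ζ‖ * ‖ζ‖ = ‖ζ‖ ^ 2 := (sq ‖ζ‖).symm
  rw [hsq] at t2
  have hfac : ‖ζ‖ * ‖η‖ = ‖ζ‖ * ‖η‖ := by ring
  rw [hfac]
  linarith [t2, t3, t4, le_of_eq t1.symm, le_of_eq t1]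

/-- Lower bound for the second-order term, `j = 1`. -/
lemma RboundB {d : ℕ} (ω : EuclideanSpace ℝ (Fin 2 × Fin 2)) (X : Fin 2 × Fin 2 × Fin d → ℝ)
    (M : Matrix (Fin d) (Fin d) ℂ) (Λ : ℝ)
    (hΛ : ∀ ξ σ : EuclideanSpace ℂ (Fin d),
      ‖(@inner ℂ _ _ (mulVecE M ξ) σ)‖ ≤ Λ * ‖ξ‖ * ‖σ‖) :
    2⁻¹ * (‖cw ω 1‖ ^ 2 * (@inner ℂ _ _ (mulVecE M (zvec X 1)) (zvec X 1)).re
        - ‖cw ω 1‖ ^ 2 * ‖(@inner ℂ _ _ (mulVecE M (zvec X 1)) (Jc (zvec X 1)))‖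
        - 2 * (‖cw ω 0‖ * ‖cw ω 1‖) * (Λ * ‖zvec X 1‖ * ‖zvec X 0‖))
      ≤ (@inner ℂ _ _ (mulVecE M (zvec X 1)) (cw ω 1 • Tv ω X)).re := by
  set x := mulVecE M (zvec X 1) with hx
  set ζ := cw ω 0 with hζ
  set η := cw ω 1 with hη
  have hTin : (@inner ℂ _ _ x (η • Tv ω X))
      = (2⁻¹ : ℂ) * ((η * conj ζ) * (@inner ℂ _ _ x (zvec X 0))
        + (η * ζ) * (@inner ℂ _ _ x (Jc (zvec X 0)))
        + (η * conj η) * (@inner ℂ _ _ x (zvec X 1))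
        + (η * η) * (@inner ℂ _ _ x (Jc (zvec X 1)))) := by
    rw [inner_smul_right, Tv_decomp]
    simp only [inner_smul_right, inner_add_right, ← hζ, ← hη]
    ring
  rw [hTin, half_re]
  have hsplit : ((η * conj ζ) * (@inner ℂ _ _ x (zvec X 0))
        + (η * ζ) * (@inner ℂ _ _ x (Jc (zvec X 0)))
        + (η * conj η) * (@inner ℂ _ _ x (zvec X 1))
        + (η * η) * (@inner ℂ _ _ x (Jc (zvec X 1)))).re
      = ((η * conj ζ) * (@inner ℂ _ _ x (zvec X 0))).re
        + ((η * ζ) * (@inner ℂ _ _ x (Jc (zvec X 0)))).re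
        + ((η * conj η) * (@inner ℂ _ _ x (zvec X 1))).re
        + ((η * η) * (@inner ℂ _ _ x (Jc (zvec X 1)))).re := by
    simp [Complex.add_re]
  rw [hsplit]
  have hcrossK : ‖(@inner ℂ _ _ x (zvec X 0))‖ ≤ Λ * ‖zvec X 1‖ * ‖zvec X 0‖ := hΛ _ _
  have hcrossKJ : ‖(@inner ℂ _ _ x (Jc (zvec X 0)))‖ ≤ Λ * ‖zvec X 1‖ * ‖zvec X 0‖ := by
    have := hΛ (zvec X 1) (Jc (zvec X 0))
    rw [norm_Jc] at this
    exact this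
  have t1 : ((η * conj η) * (@inner ℂ _ _ x (zvec X 1))).re
      = ‖η‖ ^ 2 * (@inner ℂ _ _ x (zvec X 1)).re := term_eq _ _
  have t2 : -(‖η‖ * ‖η‖ * ‖(@inner ℂ _ _ x (Jc (zvec X 1)))‖)
      ≤ ((η * η) * (@inner ℂ _ _ x (Jc (zvec X 1)))).re := term_bound _ _ _ _ (le_refl _)
  have t3 : -(‖η‖ * ‖ζ‖ * (Λ * ‖zvec X 1‖ * ‖zvec X 0‖))
      ≤ ((η * conj ζ) * (@inner ℂ _ _ x (zvec X 0))).re := by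
    have := term_bound η (conj ζ) _ _ hcrossK
    rw [RCLike.norm_conj] at this
    exact this
  have t4 : -(‖η‖ * ‖ζ‖ * (Λ * ‖zvec X 1‖ * ‖zvec X 0‖))
      ≤ ((η * ζ) * (@inner ℂ _ _ x (Jc (zvec X 0)))).re := term_bound _ _ _ _ hcrossKJ
  have hsq : ‖η‖ * ‖η‖ = ‖η‖ ^ 2 := (sq ‖η‖).symm
  rw [hsq] at t2
  have hfac : ‖ζ‖ * ‖η‖ = ‖η‖ * ‖ζ‖ := by ring
  rw [hfac]
  linarith [t2, t3, t4, le_of_eq t1.symm, le_of_eq t1]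

/-- The purely scalar part of the final estimate. -/
lemma key_scalar (p Λ κ Δm a b u v P Q GA GB R0 R1 s2 s : ℝ)
    (hp : 2 < p) (hΛ0 : 0 ≤ Λ) (hΔm : 0 < Δm)
    (hκ : (p - 2) * Λ / Δm ≤ κ)
    (hsuv : s = u ^ 2 + v ^ 2) (hspos : 0 < s) (hs2 : 0 ≤ s2)
    (ha0 : 0 ≤ a) (hb0 : 0 ≤ b) (hu0 : 0 ≤ u) (hv0 : 0 ≤ v)
    (hGA0 : 0 ≤ GA) (hGB0 : 0 ≤ GB)
    (dA' : Δm * a ^ 2 + (1 - 2 / p) * GA ≤ P)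
    (dB' : Δm * b ^ 2 + (1 - 2 / p) * GB ≤ Q)
    (hOR : u ≤ κ⁻¹ * v ∨ v ≤ κ⁻¹ * u)
    (RA : 2⁻¹ * (u ^ 2 * P - u ^ 2 * GA - 2 * (u * v) * (Λ * a * b)) ≤ R0)
    (RB : 2⁻¹ * (v ^ 2 * Q - v ^ 2 * GB - 2 * (u * v) * (Λ * b * a)) ≤ R1) :
    0 ≤ p * (s2 * s) * P + p * (p - 2) * s2 * R0
      + (p * (s2 * s) * Q + p * (p - 2) * s2 * R1) := by
  have hp0 : (0 : ℝ) < p := by linarith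
  have hcoefA : (p - 2) / 2 * u ^ 2 ≤ (s + (p - 2) / 2 * u ^ 2) * (1 - 2 / p) := by
    have hcc : (1 - 2 / p) = (p - 2) / p := by field_simp
    rw [hcc, ← mul_div_assoc, le_div_iff₀ hp0]
    nlinarith [sq_nonneg v]
  have hcoefB : (p - 2) / 2 * v ^ 2 ≤ (s + (p - 2) / 2 * v ^ 2) * (1 - 2 / p) := by
    have hcc : (1 - 2 / p) = (p - 2) / p := by field_simp
    rw [hcc, ← mul_div_assoc, le_div_iff₀ hp0]
    nlinarith [sq_nonneg u]
  have hA1 : s * Δm * a ^ 2 ≤ (s + (p - 2) / 2 * u ^ 2) * P - (p - 2) / 2 * u ^ 2 * GA := by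
    have hαA : s ≤ s + (p - 2) / 2 * u ^ 2 := by nlinarith [sq_nonneg u]
    have h1 : (s + (p - 2) / 2 * u ^ 2) * (Δm * a ^ 2 + (1 - 2 / p) * GA)
        ≤ (s + (p - 2) / 2 * u ^ 2) * P :=
      mul_le_mul_of_nonneg_left dA' (by linarith)
    linarith [h1, mul_nonneg (mul_nonneg hΔm.le (sq_nonneg a)) (sub_nonneg.mpr hαA),
      mul_le_mul_of_nonneg_right hcoefA hGA0]
  have hB1 : s * Δm * b ^ 2 ≤ (s + (p - 2) / 2 * v ^ 2) * Q - (p - 2) / 2 * v ^ 2 * GB := by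
    have hαB : s ≤ s + (p - 2) / 2 * v ^ 2 := by nlinarith [sq_nonneg v]
    have h1 : (s + (p - 2) / 2 * v ^ 2) * (Δm * b ^ 2 + (1 - 2 / p) * GB)
        ≤ (s + (p - 2) / 2 * v ^ 2) * Q :=
      mul_le_mul_of_nonneg_left dB' (by linarith)
    linarith [h1, mul_nonneg (mul_nonneg hΔm.le (sq_nonneg b)) (sub_nonneg.mpr hαB),
      mul_le_mul_of_nonneg_right hcoefB hGB0]
  have hcross : (p - 2) * Λ * (u * v) ≤ Δm * s := by
    rcases eq_or_lt_of_le hΛ0 with hΛz | hΛpos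
    · have hds : (0 : ℝ) ≤ Δm * s := mul_nonneg hΔm.le hspos.le
      rw [← hΛz]
      simpa using hds
    · have hκpos : 0 < κ := by
        have h1 : 0 < (p - 2) * Λ / Δm := div_pos (by nlinarith) hΔm
        linarith
      have huv : u * v ≤ κ⁻¹ * s := by
        have hκinv : 0 ≤ κ⁻¹ := inv_nonneg.mpr hκpos.le
        rcases hOR with h | h
        · nlinarith [sq_nonneg u, sq_nonneg v, mul_le_mul_of_nonneg_right h hv0]
        · nlinarith [sq_nonneg u, sq_nonneg v, mul_le_mul_of_nonneg_right h hu0]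
      have hκΔ : (p - 2) * Λ ≤ κ * Δm := by
        rw [div_le_iff₀ hΔm] at hκ
        linarith
      have h2 : (p - 2) * Λ * (u * v) ≤ (p - 2) * Λ * (κ⁻¹ * s) :=
        mul_le_mul_of_nonneg_left huv (by nlinarith)
      have h3 : (p - 2) * Λ * (κ⁻¹ * s) ≤ Δm * s := by
        rw [show (p - 2) * Λ * (κ⁻¹ * s) = ((p - 2) * Λ * κ⁻¹) * s by ring]
        apply mul_le_mul_of_nonneg_right _ hspos.le
        rw [show (p - 2) * Λ * κ⁻¹ = (p - 2) * Λ / κ by ring, div_le_iff₀ hκpos]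
        nlinarith
      linarith
  have hkey : 0 ≤ s * (P + Q)
      + (p - 2) * (2⁻¹ * (u ^ 2 * P - u ^ 2 * GA - 2 * (u * v) * (Λ * a * b))
        + 2⁻¹ * (v ^ 2 * Q - v ^ 2 * GB - 2 * (u * v) * (Λ * b * a))) := by
    have hcross2 : 2 * ((p - 2) * Λ * (u * v)) * (a * b) ≤ Δm * s * (a ^ 2 + b ^ 2) := by
      have h1 : 0 ≤ a * b := mul_nonneg ha0 hb0
      have h2 := mul_le_mul_of_nonneg_right hcross h1
      have h3 : Δm * s * (2 * (a * b)) ≤ Δm * s * (a ^ 2 + b ^ 2) :=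
        mul_le_mul_of_nonneg_left (by nlinarith [sq_nonneg (a - b)])
          (mul_nonneg hΔm.le hspos.le)
      nlinarith
    linarith [hA1, hB1, hcross2]
  have hmul1 := mul_le_mul_of_nonneg_left RA
    (show (0 : ℝ) ≤ p * (p - 2) * s2 from
      mul_nonneg (mul_nonneg (by linarith) (by linarith)) hs2)
  have hmul2 := mul_le_mul_of_nonneg_left RB
    (show (0 : ℝ) ≤ p * (p - 2) * s2 from
      mul_nonneg (mul_nonneg (by linarith) (by linarith)) hs2)
  have hmul3 := mul_le_mul_of_nonneg_left hkey
    (show (0 : ℝ) ≤ p * s2 from mul_nonneg (by linarith) hs2)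
  nlinarith [hmul1, hmul2, hmul3]

/-- `F_p(ζ,η) = (|ζ|²+|η|²)^{p/2}` is `(A,B)`-convex in the region `S_κ`
for every `κ ≥ κ_p = (p−2)Λ(A,B)/Δ_p(A,B)`. -/
theorem stmt10 {d : ℕ} (p : ℝ) (hp : 2 < p) (A B : Matrix (Fin d) (Fin d) ℂ)
    (hAB : 0 < min (Delta p A) (Delta p B)) (Λ : ℝ)
    (hΛA : ∀ ξ σ : EuclideanSpace ℂ (Fin d),
      ‖(@inner ℂ _ _ (mulVecE A ξ) σ)‖ ≤ Λ * ‖ξ‖ * ‖σ‖)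
    (hΛB : ∀ ξ σ : EuclideanSpace ℂ (Fin d),
      ‖(@inner ℂ _ _ (mulVecE B ξ) σ)‖ ≤ Λ * ‖ξ‖ * ‖σ‖)
    (κ : ℝ) (hκ : (p - 2) * Λ / min (Delta p A) (Delta p B) ≤ κ)
    (ω : EuclideanSpace ℝ (Fin 2 × Fin 2))
    (hω : Real.sqrt (ω (0, 0) ^ 2 + ω (0, 1) ^ 2)
            ≤ κ⁻¹ * Real.sqrt (ω (1, 0) ^ 2 + ω (1, 1) ^ 2) ∨
          Real.sqrt (ω (1, 0) ^ 2 + ω (1, 1) ^ 2)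
            ≤ κ⁻¹ * Real.sqrt (ω (0, 0) ^ 2 + ω (0, 1) ^ 2))
    (X : Fin 2 × Fin 2 × Fin d → ℝ) :
    0 ≤ genHess ![A, B] (fun w => ‖w‖ ^ p) ω X := by
  rw [genHess_eq ![A, B] p hp ω X, Fin.sum_univ_two]
  simp only [Matrix.cons_val_zero, Matrix.cons_val_one, Matrix.head_cons]
  rcases Nat.eq_zero_or_pos d with hd | hd
  · subst hd
    have hzero : ∀ v w : EuclideanSpace ℂ (Fin 0), (@inner ℂ _ _ v w) = 0 := by
      intro v w
      rw [PiLp.inner_apply]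
      simp
    rw [hzero, hzero, hzero, hzero]
    simp
  have hΛ0 : 0 ≤ Λ := by
    have h := hΛA (EuclideanSpace.single ⟨0, hd⟩ 1) (EuclideanSpace.single ⟨0, hd⟩ 1)
    rw [EuclideanSpace.norm_single] at h
    simp only [norm_one, mul_one] at h
    exact le_trans (norm_nonneg _) h
  by_cases hω0 : ω = 0
  · subst hω0
    have hcw : ∀ j : Fin 2, cw (0 : EuclideanSpace ℝ (Fin 2 × Fin 2)) j = 0 := by
      intro j
      simp [cw]
    have hs1 : ((‖(0 : EuclideanSpace ℝ (Fin 2 × Fin 2))‖ ^ 2 : ℝ)) ^ (p / 2 - 1) = 0 := by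
      rw [norm_zero]
      rw [show ((0 : ℝ) ^ 2 : ℝ) = 0 by norm_num]
      exact Real.zero_rpow (by intro h; apply absurd h; intro h'; linarith)
    rw [hs1, hcw 0, hcw 1]
    simp
  -- main case
  have hΔm : 0 < min (Delta p A) (Delta p B) := hAB
  have hspos : (0 : ℝ) < ‖ω‖ ^ 2 := by
    have := norm_pos_iff.mpr hω0
    positivity
  have hs12 : (‖ω‖ ^ 2 : ℝ) ^ (p / 2 - 1) = (‖ω‖ ^ 2 : ℝ) ^ (p / 2 - 2) * (‖ω‖ ^ 2 : ℝ) := by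
    rw [show p / 2 - 1 = (p / 2 - 2) + 1 by ring, Real.rpow_add hspos, Real.rpow_one]
  rw [hs12]
  have dA := deltaC p hp A Λ hΛ0 hΛA (zvec X 0)
  have dB := deltaC p hp B Λ hΛ0 hΛB (zvec X 1)
  have dA' : min (Delta p A) (Delta p B) * ‖zvec X 0‖ ^ 2
      + (1 - 2 / p) * ‖(@inner ℂ _ _ (mulVecE A (zvec X 0)) (Jc (zvec X 0)))‖
      ≤ (@inner ℂ _ _ (mulVecE A (zvec X 0)) (zvec X 0)).re := by
    have h := mul_le_mul_of_nonneg_right (min_le_left (Delta p A) (Delta p B))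
      (sq_nonneg ‖zvec X 0‖)
    linarith
  have dB' : min (Delta p A) (Delta p B) * ‖zvec X 1‖ ^ 2
      + (1 - 2 / p) * ‖(@inner ℂ _ _ (mulVecE B (zvec X 1)) (Jc (zvec X 1)))‖
      ≤ (@inner ℂ _ _ (mulVecE B (zvec X 1)) (zvec X 1)).re := by
    have h := mul_le_mul_of_nonneg_right (min_le_right (Delta p A) (Delta p B))
      (sq_nonneg ‖zvec X 1‖)
    linarith
  have hOR : ‖cw ω 0‖ ≤ κ⁻¹ * ‖cw ω 1‖ ∨ ‖cw ω 1‖ ≤ κ⁻¹ * ‖cw ω 0‖ := by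
    have hsqu : Real.sqrt (ω (0, 0) ^ 2 + ω (0, 1) ^ 2) = ‖cw ω 0‖ := by
      rw [← cw_norm_sq ω 0, Real.sqrt_sq (norm_nonneg _)]
    have hsqv : Real.sqrt (ω (1, 0) ^ 2 + ω (1, 1) ^ 2) = ‖cw ω 1‖ := by
      rw [← cw_norm_sq ω 1, Real.sqrt_sq (norm_nonneg _)]
    rw [hsqu, hsqv] at hω
    exact hω
  exact key_scalar p Λ κ (min (Delta p A) (Delta p B)) (‖zvec X 0‖) (‖zvec X 1‖)
    (‖cw ω 0‖) (‖cw ω 1‖) _ _ _ _ _ _ ((‖ω‖ ^ 2 : ℝ) ^ (p / 2 - 2)) (‖ω‖ ^ 2)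
    hp hΛ0 hΔm hκ (omega_norm_sq ω) hspos (Real.rpow_nonneg hspos.le _)
    (norm_nonneg _) (norm_nonneg _) (norm_nonneg _) (norm_nonneg _)
    (norm_nonneg _) (norm_nonneg _) dA' dB' hOR
    (RboundA ω X A Λ hΛA) (RboundB ω X B Λ hΛB)
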